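/- Field-to-fluid correspondence (flat-target instance of the main duality): let φ = (φ₁,φ₂) : ℝ³ → ℝ² be a C² map and P̄ : ℝ² → ℝ a C¹ function, and suppose φ is σ₂-critical with potential P̄, i.e. τ_{σ₂}(φ)ₐ(x) = (∂ₐP̄)(φ(x)) for a = 1,2 and all x ∈ ℝ³. Then the vector field V = ∇φ₁ × ∇φ₂ satisfies the steady incompressible Euler equations on ℝ³ with Bernoulli function P = P̄∘φ: V × curl V = ∇(P̄∘φ) and div V = 0 everywhere; equivalently, (V·∇)V = −∇p and div V = 0 with pressure p = P̄∘φ − ½|V|². -/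

import Mathlib

open scoped BigOperators

/-- Partial derivative `∂ⱼ f` of a scalar function on `ℝ³`. -/
noncomputable def pd (j : Fin 3) (f : (Fin 3 → ℝ) → ℝ) (x : Fin 3 → ℝ) : ℝ :=
  fderiv ℝ f x (Pi.single j 1)

/-- Cross product on `ℝ³`. -/
def cross (a b : Fin 3 → ℝ) : Fin 3 → ℝ :=
  ![a 1 * b 2 - a 2 * b 1, a 2 * b 0 - a 0 * b 2, a 0 * b 1 - a 1 * b 0]

/-- Curl of a vector field on `ℝ³`. -/
noncomputable def curl (v : (Fin 3 → ℝ) → Fin 3 → ℝ) (x : Fin 3 → ℝ) : Fin 3 → ℝ :=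
  ![pd 1 (fun y => v y 2) x - pd 2 (fun y => v y 1) x,
    pd 2 (fun y => v y 0) x - pd 0 (fun y => v y 2) x,
    pd 0 (fun y => v y 1) x - pd 1 (fun y => v y 0) x]

/-- Cauchy–Green tensor `Cᵢⱼ = Σₐ ∂ᵢφₐ ∂ⱼφₐ` of a map `φ : ℝ³ → ℝ²`. -/
noncomputable def CG (φ : Fin 2 → (Fin 3 → ℝ) → ℝ) (i j : Fin 3) (x : Fin 3 → ℝ) : ℝ :=
  ∑ a : Fin 2, pd i (φ a) x * pd j (φ a) x

/-- `|Dφ|² = Σ_{a,i} (∂ᵢφₐ)²`. -/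
noncomputable def eDen (φ : Fin 2 → (Fin 3 → ℝ) → ℝ) (x : Fin 3 → ℝ) : ℝ :=
  ∑ a : Fin 2, ∑ i : Fin 3, (pd i (φ a) x) ^ 2

/-- σ₂-tension field `τ_{σ₂}(φ)ₐ = Σⱼ ∂ⱼ(|Dφ|² ∂ⱼφₐ − Σᵢ Cᵢⱼ ∂ᵢφₐ)`. -/
noncomputable def tau2 (φ : Fin 2 → (Fin 3 → ℝ) → ℝ) (a : Fin 2) (x : Fin 3 → ℝ) : ℝ :=
  ∑ j : Fin 3,
    pd j (fun y => eDen φ y * pd j (φ a) y - ∑ i : Fin 3, CG φ i j y * pd i (φ a) y) x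

/-- Fluid velocity `V = ∇φ₁ × ∇φ₂` associated to `φ`. -/
noncomputable def Vfield (φ : Fin 2 → (Fin 3 → ℝ) → ℝ) (x : Fin 3 → ℝ) : Fin 3 → ℝ :=
  cross (fun i => pd i (φ 0) x) (fun i => pd i (φ 1) x)
/-!
Write `u = ∇φ₁`, `v = ∇φ₂`, so that `V = u × v`. Lagrange's identity identifies the two
σ₂-stress fields with `v × V` and `V × u`; since gradients are curl-free, `div (A × B) =
B · curl A - A · curl B` gives `τ_{σ₂}(φ) = (-v · curl V, u · curl V)`. By the chain rule
`∇(P̄∘φ) = τ₁ u + τ₂ v`, which is the expansion of `(u × v) × curl V`. Incompressibility is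
`div (u × v) = 0` for curl-free `u, v`, and the pressure form follows from
`(V·∇)V = ∇(½|V|²) - V × curl V`.
-/

open Matrix

lemma cross_eq_crossProduct (a b : Fin 3 → ℝ) : cross a b = a ⨯₃ b := rfl

noncomputable def grad (f : (Fin 3 → ℝ) → ℝ) (x : Fin 3 → ℝ) : Fin 3 → ℝ :=
  fun i => pd i f x

noncomputable def divergence (v : (Fin 3 → ℝ) → Fin 3 → ℝ) (x : Fin 3 → ℝ) : ℝ :=
  ∑ i, pd i (fun y => v y i) x

section Calculus

variable {x : Fin 3 → ℝ} {j : Fin 3} {f g : (Fin 3 → ℝ) → ℝ}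

lemma pd_sub (hf : DifferentiableAt ℝ f x) (hg : DifferentiableAt ℝ g x) :
    pd j (fun y => f y - g y) x = pd j f x - pd j g x := by
  simp [pd, fderiv_fun_sub hf hg]

lemma pd_mul (hf : DifferentiableAt ℝ f x) (hg : DifferentiableAt ℝ g x) :
    pd j (fun y => f y * g y) x = pd j f x * g x + f x * pd j g x := by
  simp [pd, fderiv_fun_mul hf hg]
  ring

lemma pd_const_mul (c : ℝ) (hf : DifferentiableAt ℝ f x) :
    pd j (fun y => c * f y) x = c * pd j f x := by
  simp [pd, fderiv_const_mul hf c]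

lemma pd_sum {ι : Type*} (s : Finset ι) (A : ι → (Fin 3 → ℝ) → ℝ)
    (h : ∀ i ∈ s, DifferentiableAt ℝ (A i) x) :
    pd j (fun y => ∑ i ∈ s, A i y) x = ∑ i ∈ s, pd j (A i) x := by
  simp [pd, fderiv_fun_sum h]

lemma pd_sq (hf : DifferentiableAt ℝ f x) :
    pd j (fun y => f y ^ 2) x = 2 * f x * pd j f x := by
  simp only [sq, pd_mul hf hf]
  ring

lemma pd_comp {ι : Type*} [Fintype ι] [DecidableEq ι] {φ : ι → (Fin 3 → ℝ) → ℝ}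
    {P : (ι → ℝ) → ℝ} (hφ : ∀ a, DifferentiableAt ℝ (φ a) x)
    (hP : DifferentiableAt ℝ P (fun b => φ b x)) :
    pd j (fun y => P (fun b => φ b y)) x
      = ∑ a, fderiv ℝ P (fun b => φ b x) (Pi.single a 1) * pd j (φ a) x := by
  have hΦ : HasFDerivAt (fun y b => φ b y) (ContinuousLinearMap.pi fun b => fderiv ℝ (φ b) x) x :=
    hasFDerivAt_pi.2 fun b => (hφ b).hasFDerivAt
  have hdir : (ContinuousLinearMap.pi fun b => fderiv ℝ (φ b) x) (Pi.single j 1)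
      = ∑ a, pd j (φ a) x • (Pi.single a 1 : ι → ℝ) := by
    ext b
    simp [pd, Pi.single_apply]
  have hcomp : HasFDerivAt (fun y => P fun b => φ b y)
      ((fderiv ℝ P fun b => φ b x).comp (ContinuousLinearMap.pi fun b => fderiv ℝ (φ b) x)) x :=
    hP.hasFDerivAt.comp x hΦ
  rw [pd, hcomp.fderiv, ContinuousLinearMap.comp_apply]
  simp only [hdir, map_sum, map_smul, smul_eq_mul, mul_comm]

lemma pd_comm (hf : ContDiff ℝ 2 f) (i j : Fin 3) (x : Fin 3 → ℝ) :
    pd i (fun y => pd j f y) x = pd j (fun y => pd i f y) x := by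
  have hdiff : DifferentiableAt ℝ (fderiv ℝ f) x :=
    (hf.fderiv_right (m := 1) le_rfl).differentiable one_ne_zero x
  have hsecond : ∀ k m : Fin 3,
      pd k (fun y => pd m f y) x = fderiv ℝ (fderiv ℝ f) x (Pi.single k 1) (Pi.single m 1) := by
    intro k m
    simp [pd, fderiv_clm_apply hdiff (differentiableAt_const _)]
  rw [hsecond, hsecond, hf.contDiffAt.isSymmSndFDerivAt (by simp)]

lemma differentiable_grad_apply (hf : ContDiff ℝ 2 f) (i : Fin 3) :
    Differentiable ℝ (fun y => grad f y i) :=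
  ((hf.fderiv_right (m := 1) le_rfl).clm_apply contDiff_const).differentiable one_ne_zero

lemma curl_grad (hf : ContDiff ℝ 2 f) (x : Fin 3 → ℝ) : curl (grad f) x = 0 := by
  simp [curl, grad, pd_comm hf 1 2, pd_comm hf 0 2, pd_comm hf 0 1]

variable {A B : (Fin 3 → ℝ) → Fin 3 → ℝ}

lemma divergence_cross (hA : ∀ i, DifferentiableAt ℝ (fun y => A y i) x)
    (hB : ∀ i, DifferentiableAt ℝ (fun y => B y i) x) :
    divergence (fun y => A y ⨯₃ B y) x = B x ⬝ᵥ curl A x - A x ⬝ᵥ curl B x := by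
  simp only [divergence, cross_apply, Fin.sum_univ_three, vec3_dotProduct, curl]
  simp (disch := fun_prop) only [Matrix.cons_val, pd_sub, pd_mul]
  ring

lemma sum_mul_pd_eq_pd_half_sq_sub_cross_curl (hA : ∀ i, DifferentiableAt ℝ (fun y => A y i) x)
    (i : Fin 3) :
    ∑ j, A x j * pd j (fun y => A y i) x
      = pd i (fun y => 1 / 2 * ∑ m, A y m ^ 2) x - (A x ⨯₃ curl A x) i := by
  rw [pd_const_mul _ (by fun_prop), pd_sum _ _ (fun m _ => by fun_prop)]
  simp only [pd_sq (hA _)]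
  fin_cases i <;>
  · simp only [Fin.reduceFinMk, Fin.isValue, Fin.sum_univ_three, curl, cross_apply, cons_val]
    ring

end Calculus

noncomputable def sigma2Stress (φ : Fin 2 → (Fin 3 → ℝ) → ℝ) (a : Fin 2) (y : Fin 3 → ℝ) :
    Fin 3 → ℝ :=
  fun j => eDen φ y * pd j (φ a) y - ∑ i, CG φ i j y * pd i (φ a) y

section Sigma2

variable {φ : Fin 2 → (Fin 3 → ℝ) → ℝ} {x : Fin 3 → ℝ}

lemma tau2_eq_divergence_sigma2Stress (a : Fin 2) :
    tau2 φ a x = divergence (sigma2Stress φ a) x := rfl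

lemma Vfield_eq_cross_grad (y : Fin 3 → ℝ) :
    Vfield φ y = grad (φ 0) y ⨯₃ grad (φ 1) y := rfl

lemma sigma2Stress_zero_eq_cross (y : Fin 3 → ℝ) :
    sigma2Stress φ 0 y = grad (φ 1) y ⨯₃ Vfield φ y := by
  rw [Vfield_eq_cross_grad, cross_cross_eq_smul_sub_smul']
  ext j
  simp only [sigma2Stress, eDen, CG, grad, dotProduct, Fin.sum_univ_two, Fin.sum_univ_three,
    Pi.sub_apply, Pi.smul_apply, smul_eq_mul]
  ring

lemma sigma2Stress_one_eq_cross (y : Fin 3 → ℝ) :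
    sigma2Stress φ 1 y = Vfield φ y ⨯₃ grad (φ 0) y := by
  rw [Vfield_eq_cross_grad, cross_cross_eq_smul_sub_smul]
  ext j
  simp only [sigma2Stress, eDen, CG, grad, dotProduct, Fin.sum_univ_two, Fin.sum_univ_three,
    Pi.sub_apply, Pi.smul_apply, smul_eq_mul]
  ring

lemma differentiable_Vfield_apply (hφ : ∀ a, ContDiff ℝ 2 (φ a)) (i : Fin 3) :
    Differentiable ℝ (fun y => Vfield φ y i) := by
  have h0 := differentiable_grad_apply (hφ 0)
  have h1 := differentiable_grad_apply (hφ 1)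
  simp only [Vfield_eq_cross_grad, cross_apply]
  fin_cases i <;> simp <;> fun_prop

lemma divergence_Vfield (hφ : ∀ a, ContDiff ℝ 2 (φ a)) (x : Fin 3 → ℝ) :
    divergence (Vfield φ) x = 0 := by
  change divergence (fun y => grad (φ 0) y ⨯₃ grad (φ 1) y) x = 0
  rw [divergence_cross (fun i => differentiable_grad_apply (hφ 0) i x)
    (fun i => differentiable_grad_apply (hφ 1) i x), curl_grad (hφ 0), curl_grad (hφ 1)]
  simp

lemma tau2_zero_eq_neg_dot_curl (hφ : ∀ a, ContDiff ℝ 2 (φ a)) (x : Fin 3 → ℝ) :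
    tau2 φ 0 x = -(grad (φ 1) x ⬝ᵥ curl (Vfield φ) x) := by
  rw [tau2_eq_divergence_sigma2Stress, funext sigma2Stress_zero_eq_cross,
    divergence_cross (fun i => differentiable_grad_apply (hφ 1) i x)
      (fun i => differentiable_Vfield_apply hφ i x), curl_grad (hφ 1)]
  simp

lemma tau2_one_eq_dot_curl (hφ : ∀ a, ContDiff ℝ 2 (φ a)) (x : Fin 3 → ℝ) :
    tau2 φ 1 x = grad (φ 0) x ⬝ᵥ curl (Vfield φ) x := by
  rw [tau2_eq_divergence_sigma2Stress, funext sigma2Stress_one_eq_cross,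
    divergence_cross (fun i => differentiable_Vfield_apply hφ i x)
      (fun i => differentiable_grad_apply (hφ 0) i x), curl_grad (hφ 0)]
  simp

lemma Vfield_cross_curl_eq (hφ : ∀ a, ContDiff ℝ 2 (φ a)) (x : Fin 3 → ℝ) :
    Vfield φ x ⨯₃ curl (Vfield φ) x = tau2 φ 0 x • grad (φ 0) x + tau2 φ 1 x • grad (φ 1) x := by
  rw [tau2_zero_eq_neg_dot_curl hφ, tau2_one_eq_dot_curl hφ, Vfield_eq_cross_grad,
    cross_cross_eq_smul_sub_smul, neg_smul]
  abel

end Sigma2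

/-- if the `C²` map `φ : ℝ³ → ℝ²` is σ₂-critical with `C¹` potential `P̄`
(`τ_{σ₂}(φ) = (∇P̄)∘φ`), then `V = ∇φ₁ × ∇φ₂` satisfies the steady incompressible Euler
equations with Bernoulli function `P̄∘φ`: `V × curl V = ∇(P̄∘φ)`, `div V = 0`, and
equivalently `(V·∇)V = -∇p` with `p = P̄∘φ − ½|V|²`. -/
theorem stmt7 (φ : Fin 2 → (Fin 3 → ℝ) → ℝ) (hφ : ∀ a, ContDiff ℝ 2 (φ a))
    (Pbar : (Fin 2 → ℝ) → ℝ) (hPbar : ContDiff ℝ 1 Pbar)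
    (hcrit : ∀ (a : Fin 2) (x : Fin 3 → ℝ),
      tau2 φ a x = fderiv ℝ Pbar (fun b => φ b x) (Pi.single a 1))
    (p : (Fin 3 → ℝ) → ℝ)
    (hp : p = fun x => Pbar (fun b => φ b x) - (1/2) * ∑ i, (Vfield φ x i) ^ 2) :
    (∀ x i, cross (Vfield φ x) (curl (Vfield φ) x) i
        = pd i (fun y => Pbar (fun b => φ b y)) x) ∧
    (∀ x, (∑ i, pd i (fun y => Vfield φ y i) x) = 0) ∧
    (∀ x i, (∑ j, Vfield φ x j * pd j (fun y => Vfield φ y i) x) = - pd i p x) := by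
  have hdφ : ∀ a, Differentiable ℝ (φ a) := fun a => (hφ a).differentiable two_ne_zero
  have hdV := differentiable_Vfield_apply hφ
  have hdP : Differentiable ℝ Pbar := hPbar.differentiable one_ne_zero
  have bernoulli : ∀ x i, cross (Vfield φ x) (curl (Vfield φ) x) i
      = pd i (fun y => Pbar (fun b => φ b y)) x := by
    intro x i
    rw [cross_eq_crossProduct, Vfield_cross_curl_eq hφ,
      pd_comp (fun a => hdφ a x) (hdP _), Fin.sum_univ_two, ← hcrit, ← hcrit]
    simp [grad]
  refine ⟨bernoulli, divergence_Vfield hφ, fun x i => ?_⟩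
  rw [sum_mul_pd_eq_pd_half_sq_sub_cross_curl (fun m => hdV m x), ← cross_eq_crossProduct,
    bernoulli, hp, pd_sub (by fun_prop) (by fun_prop)]
  ring
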